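/- Projection (and, more generally, contraction) does not increase the trace norm: if M is a complex d × d matrix with I − MᴴM positive semidefinite, then for every complex d × d matrix A, ‖M·A·Mᴴ‖₁ ≤ ‖A‖₁. -/

import Mathlib

open Matrix
open scoped ComplexOrder

/-- The positive semidefinite square root of a positive semidefinite matrix
(the definition removed from Mathlib, restored with its old meaning). -/
noncomputable def Matrix.PosSemidef.sqrt {n 𝕜 : Type*} [Fintype n] [DecidableEq n] [RCLike 𝕜]
    {A : Matrix n n 𝕜} (hA : A.PosSemidef) : Matrix n n 𝕜 :=
  hA.1.eigenvectorUnitary.1 * diagonal ((↑) ∘ (√·) ∘ hA.1.eigenvalues) *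
  (star hA.1.eigenvectorUnitary : Matrix n n 𝕜)

/-- The trace norm of a complex square matrix: the trace of the positive
semidefinite square root of `Aᴴ * A`. -/
noncomputable def traceNorm {d : Type*} [Fintype d] [DecidableEq d] (A : Matrix d d ℂ) : ℝ :=
  ((Matrix.posSemidef_conjTranspose_mul_self A).sqrt.trace).re

/-! The trace norm is the largest value of `Re tr (U X)` over contractions `U`. The upper bound
comes from computing the trace in an orthonormal eigenbasis `(vᵢ)` of `Xᴴ X`, where
`‖X vᵢ‖ = √λᵢ`, and it is attained at the partial isometry `U = (Xᴴ X)^(-1/2) Xᴴ`. For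
`X = M A Mᴴ` the cyclicity of the trace gives `Re tr (U M A Mᴴ) = Re tr ((Mᴴ U M) A)`, and
`Mᴴ U M` is again a contraction. -/

open scoped Matrix.Norms.L2Operator MatrixOrder InnerProductSpace

lemma CStarRing.norm_le_one_iff_star_mul_self_le_one {A : Type*} [CStarAlgebra A] [PartialOrder A]
    [StarOrderedRing A] (a : A) : ‖a‖ ≤ 1 ↔ star a * a ≤ 1 := by
  rw [← CStarAlgebra.norm_le_one_iff_of_nonneg _ (star_mul_self_nonneg a),
    CStarRing.norm_star_mul_self, ← sq, sq_le_one_iff₀ (norm_nonneg a)]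

lemma LinearMap.norm_trace_comp_le {𝕜 E ι : Type*} [RCLike 𝕜] [NormedAddCommGroup E]
    [InnerProductSpace 𝕜 E] [Fintype ι] (B : E →L[𝕜] E) (X : E →ₗ[𝕜] E)
    (b : OrthonormalBasis ι 𝕜 E) :
    ‖LinearMap.trace 𝕜 E (B.toLinearMap ∘ₗ X)‖ ≤ ‖B‖ * ∑ i, ‖X (b i)‖ := by
  rw [LinearMap.trace_eq_sum_inner _ b, Finset.mul_sum]
  refine (norm_sum_le _ _).trans (Finset.sum_le_sum fun i _ => ?_)
  calc ‖⟪b i, B (X (b i))⟫_𝕜‖ ≤ ‖b i‖ * ‖B (X (b i))‖ := norm_inner_le_norm _ _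
    _ = ‖B (X (b i))‖ := by rw [b.orthonormal.1 i, one_mul]
    _ ≤ ‖B‖ * ‖X (b i)‖ := B.le_opNorm _

namespace Matrix

variable {d 𝕜 : Type*} [Fintype d] [DecidableEq d] [RCLike 𝕜]

lemma trace_toEuclideanLin (A : Matrix d d 𝕜) :
    LinearMap.trace 𝕜 _ (toEuclideanLin A) = A.trace := by
  rw [toEuclideanLin_eq_toLin_orthonormal, LinearMap.trace_eq_matrix_trace 𝕜
    (EuclideanSpace.basisFun d 𝕜).toBasis, LinearMap.toMatrix_toLin]

lemma PosSemidef.sqrt_eq_cfc {A : Matrix d d 𝕜} (hA : A.PosSemidef) :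
    hA.sqrt = cfc Real.sqrt A := by
  rw [hA.1.cfc_eq, IsHermitian.cfc, Unitary.conjStarAlgAut_apply]
  rfl

lemma norm_toEuclideanLin_eigenvectorBasis (X : Matrix d d 𝕜) (i : d) :
    ‖toEuclideanLin X ((isHermitian_conjTranspose_mul_self X).eigenvectorBasis i)‖ =
      √((isHermitian_conjTranspose_mul_self X).eigenvalues i) := by
  set hG := isHermitian_conjTranspose_mul_self X
  set v := hG.eigenvectorBasis i
  have hv : toEuclideanLin Xᴴ (toEuclideanLin X v) = (hG.eigenvalues i : 𝕜) • v := by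
    rw [← LinearMap.comp_apply, ← toLpLin_mul_same, toLpLin_apply, hG.mulVec_eigenvectorBasis,
      ← RCLike.real_smul_eq_coe_smul (K := 𝕜)]
    rfl
  rw [← Real.sqrt_sq (norm_nonneg _), ← inner_self_eq_norm_sq (𝕜 := 𝕜),
    ← LinearMap.adjoint_inner_right, ← toEuclideanLin_conjTranspose_eq_adjoint, hv,
    inner_smul_right, inner_self_eq_norm_sq_to_K, hG.eigenvectorBasis.orthonormal.1 i]
  simp

end Matrix

section TraceNorm

variable {d : Type*} [Fintype d] [DecidableEq d]

lemma traceNorm_eq_sum_sqrt_eigenvalues (X : Matrix d d ℂ) :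
    traceNorm X = ∑ i, √((isHermitian_conjTranspose_mul_self X).eigenvalues i) := by
  rw [traceNorm, PosSemidef.sqrt, trace_mul_cycle, Unitary.coe_star_mul_self, one_mul,
    trace_diagonal, Complex.re_sum]
  rfl

lemma re_trace_mul_le_traceNorm {B : Matrix d d ℂ} (hB : ‖B‖ ≤ 1) (X : Matrix d d ℂ) :
    (B * X).trace.re ≤ traceNorm X := by
  set v := (isHermitian_conjTranspose_mul_self X).eigenvectorBasis
  set B' := toEuclideanCLM (n := d) (𝕜 := ℂ) B
  have hBX : toEuclideanLin (B * X) = B'.toLinearMap ∘ₗ toEuclideanLin X := by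
    rw [toLpLin_mul_same]
    rfl
  calc (B * X).trace.re ≤ ‖(B * X).trace‖ := Complex.re_le_norm _
    _ ≤ ‖B'‖ * ∑ i, ‖toEuclideanLin X (v i)‖ := by
      rw [← trace_toEuclideanLin, hBX]
      exact LinearMap.norm_trace_comp_le _ _ v
    _ ≤ ∑ i, ‖toEuclideanLin X (v i)‖ := mul_le_of_le_one_left (by positivity) hB
    _ = traceNorm X := by
      simp only [v, norm_toEuclideanLin_eigenvectorBasis, traceNorm_eq_sum_sqrt_eigenvalues]

lemma exists_l2_opNorm_le_one_re_trace_mul_eq_traceNorm (X : Matrix d d ℂ) :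
    ∃ U : Matrix d d ℂ, ‖U‖ ≤ 1 ∧ (U * X).trace.re = traceNorm X := by
  set G := Xᴴ * X
  have hG : IsSelfAdjoint G := isHermitian_conjTranspose_mul_self X
  have hcont (f : ℝ → ℝ) : ContinuousOn f (spectrum ℝ G) :=
    (finite_real_spectrum (A := G)).continuousOn f
  -- `(√0)⁻¹ = 0`, so `R` is the pseudo-inverse of `√G`.
  set R := cfc (fun x : ℝ => (√x)⁻¹) G
  refine ⟨R * Xᴴ, ?_, ?_⟩
  · have hRGR : R * Xᴴ * star (R * Xᴴ) = cfc (fun x : ℝ => √x * (√x)⁻¹) G := by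
      rw [star_mul, IsSelfAdjoint.cfc.star_eq, star_eq_conjTranspose, conjTranspose_conjTranspose,
        mul_assoc, ← mul_assoc Xᴴ]
      change R * (G * R) = _
      conv_lhs => rw [← cfc_id' ℝ G]
      rw [← cfc_mul _ _ _ (hcont _) (hcont _), ← cfc_mul _ _ _ (hcont _) (hcont _)]
      simp only [← mul_assoc, inv_mul_eq_div, Real.div_sqrt]
    have hUU : ‖R * Xᴴ‖ * ‖R * Xᴴ‖ ≤ 1 := by
      rw [← CStarRing.norm_self_mul_star, hRGR]
      refine norm_cfc_le zero_le_one fun x _ => ?_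
      rcases eq_or_ne (√x) 0 with h | h <;> simp [h]
    rwa [← sq, sq_le_one_iff₀ (norm_nonneg _)] at hUU
  · have hRG : R * Xᴴ * X = (posSemidef_conjTranspose_mul_self X).sqrt := by
      rw [PosSemidef.sqrt_eq_cfc, mul_assoc]
      change R * G = cfc Real.sqrt G
      conv_lhs => rw [← cfc_id' ℝ G]
      rw [← cfc_mul _ _ _ (hcont _) (hcont _)]
      simp only [inv_mul_eq_div, Real.div_sqrt]
    rw [hRG, traceNorm]

end TraceNorm

/-- Contraction does not increase the trace norm. -/
theorem traceNorm_contraction_le {d : Type*} [Fintype d] [DecidableEq d]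
    (M : Matrix d d ℂ) (hM : (1 - Mᴴ * M).PosSemidef)
    (A : Matrix d d ℂ) :
    traceNorm (M * A * Mᴴ) ≤ traceNorm A := by
  have hM₁ : ‖M‖ ≤ 1 := (CStarRing.norm_le_one_iff_star_mul_self_le_one M).2 (le_iff.2 hM)
  obtain ⟨U, hU, hUMAM⟩ := exists_l2_opNorm_le_one_re_trace_mul_eq_traceNorm (M * A * Mᴴ)
  have hMUM : ‖Mᴴ * U * M‖ ≤ 1 := by
    refine (norm_mul₃_le ..).trans (mul_le_one₀ (mul_le_one₀ ?_ (norm_nonneg _) hU)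
      (norm_nonneg _) hM₁)
    rwa [l2_opNorm_conjTranspose]
  calc traceNorm (M * A * Mᴴ) = (U * (M * A * Mᴴ)).trace.re := hUMAM.symm
    _ = (Mᴴ * U * M * A).trace.re := by
      rw [← mul_assoc, ← mul_assoc, trace_mul_comm, ← mul_assoc, ← mul_assoc]
    _ ≤ traceNorm A := re_trace_mul_le_traceNorm hMUM A
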